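/- Let n ≥ 1 be a natural number, let q₀, q₁ be complex numbers with q = q₀ · q₁, and let c : Fin (2*n) → Fin (2*n) → ℂ be any function. Then, as m → ∞, the expression (m : ℂ)^(-n) · ∑_{k : Fin (2*n) → Fin m} (∑_{σ a pair partition respected by k} q₀^ι(σ)) · (∑_{σ' a pair partition respected by k} q₁^ι(σ') · ∏_{{r,t} a part of σ', r < t} c r t) converges to ∑_{σ a pair partition} q^ι(σ) · ∏_{{r,t} a part of σ, r < t} c r t. (This is the combinatorial content of the statement that the mixed moments of the elements u_m(ξ_j) with respect to the tensor product of the vacuum states on Γ_{q₀}(ℝ^m) ⊗ Γ_{q₁}(H ⊗ ℂ^m) converge to the q-quasi-free Wick moments with q = q₀q₁.) -/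

import Mathlib

/-!
Expanding the product, the left side becomes
`∑_{σ, τ} q₀^ι(σ) q₁^ι(τ) ∏_τ c · m^(-n) · m^|σ ∨ τ|`: the maps `k` respecting both `σ` and `τ`
are exactly those constant on the blocks of the join `σ ∨ τ`, and there are `m^|σ ∨ τ|` of them.
The blocks of `σ ∨ τ` are unions of pairs of `σ` and of pairs of `τ`, so `|σ ∨ τ| ≤ n`, with
equality only when `σ ∨ τ = σ` and `σ ∨ τ = τ`. Hence only the diagonal `σ = τ` survives as
`m → ∞`, where `q₀^ι(σ) q₁^ι(σ) = q^ι(σ)`.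
-/

open Finset

/-- The setoid on `Fin N` induced by a finpartition of `univ : Finset (Fin N)`:
two elements are related iff they lie in a common part. -/
def Finpartition.toSetoidFin {N : ℕ} (σ : Finpartition (univ : Finset (Fin N))) :
    Setoid (Fin N) where
  r a b := ∃ s ∈ σ.parts, a ∈ s ∧ b ∈ s
  iseqv :=
    { refl := fun a => by
        obtain ⟨s, hs, ha⟩ := σ.exists_mem (mem_univ a)
        exact ⟨s, hs, ha, ha⟩
      symm := fun h => by
        obtain ⟨s, hs, ha, hb⟩ := h
        exact ⟨s, hs, hb, ha⟩
      trans := fun h h' => by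
        obtain ⟨s, hs, ha, hb⟩ := h
        obtain ⟨t, ht, hb', hc⟩ := h'
        obtain rfl := σ.eq_of_mem_parts hs ht hb hb'
        exact ⟨s, hs, ha, hc⟩ }

/-- The join `σ ⊔ τ` of two finpartitions of `univ : Finset (Fin N)` in the lattice of
finpartitions under the refinement order: its parts are the equivalence classes of the
join of the associated setoids. -/
noncomputable def Finpartition.finJoin {N : ℕ}
    (σ τ : Finpartition (univ : Finset (Fin N))) :
    Finpartition (univ : Finset (Fin N)) :=
  letI : DecidableRel (σ.toSetoidFin ⊔ τ.toSetoidFin).r := Classical.decRel _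
  Finpartition.ofSetoid (σ.toSetoidFin ⊔ τ.toSetoidFin)

/-- A pair partition: a finpartition all of whose parts have exactly two elements. -/
def IsPairPartition {N : ℕ} (σ : Finpartition (univ : Finset (Fin N))) : Prop :=
  ∀ s ∈ σ.parts, s.card = 2

instance {N : ℕ} : DecidablePred (IsPairPartition (N := N)) := fun σ =>
  decidable_of_iff (∀ s ∈ σ.parts, s.card = 2) Iff.rfl

/-- `k : Fin d → Fin m` respects a finpartition `σ` if it is constant on every part. -/
def Respects {d m : ℕ} (k : Fin d → Fin m)
    (σ : Finpartition (univ : Finset (Fin d))) : Prop :=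
  ∀ s ∈ σ.parts, ∀ a ∈ s, ∀ b ∈ s, k a = k b

instance {d m : ℕ} (k : Fin d → Fin m) : DecidablePred (Respects k) := fun σ =>
  decidable_of_iff (∀ s ∈ σ.parts, ∀ a ∈ s, ∀ b ∈ s, k a = k b) Iff.rfl

/-- The number of crossings of a pair partition: the number of (ordered, hence each counted
once) pairs of parts `{a,b}`, `{c,d}` with `a < c < b < d`. -/
def crossings {N : ℕ} (σ : Finpartition (univ : Finset (Fin N))) : ℕ :=
  ((σ.parts ×ˢ σ.parts).filter fun st =>
    ∃ a ∈ st.1, ∃ b ∈ st.1, ∃ c ∈ st.2, ∃ d ∈ st.2, a < c ∧ c < b ∧ b < d).card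

/-- The product `∏ c r t` over the parts `{r, t}` (with `r < t`) of a pair partition. -/
def pairProd {N : ℕ} (σ : Finpartition (univ : Finset (Fin N)))
    (c : Fin N → Fin N → ℂ) : ℂ :=
  ∏ s ∈ σ.parts, if h : s.Nonempty then c (s.min' h) (s.max' h) else 1

namespace Setoid

variable {α : Type*} {r s : Setoid α}

lemma map_of_le_surjective (h : r ≤ s) : Function.Surjective (map_of_le h) :=
  Quotient.ind fun a => ⟨Quotient.mk r a, rfl⟩

variable [Finite α]

lemma card_quotient_le_of_le (h : r ≤ s) : Nat.card (Quotient s) ≤ Nat.card (Quotient r) :=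
  Nat.card_le_card_of_surjective _ (map_of_le_surjective h)

lemma eq_of_le_of_card_quotient_eq (h : r ≤ s)
    (hcard : Nat.card (Quotient s) = Nat.card (Quotient r)) : r = s := by
  have hinj := ((map_of_le_surjective h).bijective_of_nat_card_le hcard.ge).1
  exact le_antisymm h fun a b hab => Quotient.exact (hinj (Quotient.sound hab))

end Setoid

namespace Finpartition

variable {N : ℕ} (σ τ : Finpartition (univ : Finset (Fin N)))

lemma toSetoidFin_iff {a b : Fin N} : σ.toSetoidFin a b ↔ a ∈ σ.part b :=
  σ.mem_part_iff_exists.symm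

lemma parts_eq_image_part : σ.parts = univ.image σ.part := by
  ext s
  refine ⟨fun hs => ?_, fun hs => ?_⟩
  · obtain ⟨a, -, rfl⟩ := σ.part_surjOn hs
    exact mem_image_of_mem _ (mem_univ a)
  · obtain ⟨a, -, rfl⟩ := mem_image.1 hs
    exact σ.part_mem.2 (mem_univ a)

lemma toSetoidFin_injective :
    Function.Injective (toSetoidFin : Finpartition (univ : Finset (Fin N)) → _) := by
  intro σ τ h
  have hpart : σ.part = τ.part := funext fun b => Finset.ext fun a => by
    rw [← toSetoidFin_iff, ← toSetoidFin_iff, h]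
  exact Finpartition.ext (by rw [parts_eq_image_part, parts_eq_image_part, hpart])

lemma toSetoidFin_eq_ker_part : σ.toSetoidFin = Setoid.ker σ.part := by
  ext a b
  rw [toSetoidFin_iff, Setoid.ker_def, σ.mem_part_iff_part_eq_part (mem_univ a) (mem_univ b)]

lemma card_quotient_toSetoidFin : Nat.card (Quotient σ.toSetoidFin) = #σ.parts := by
  rw [toSetoidFin_eq_ker_part, Nat.card_congr (Setoid.quotientKerEquivRange _),
    ← Set.image_univ, ← coe_univ, ← coe_image, ← parts_eq_image_part, Nat.card_coe_set_eq,
    Set.ncard_coe_finset]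

lemma toSetoidFin_finJoin : (σ.finJoin τ).toSetoidFin = σ.toSetoidFin ⊔ τ.toSetoidFin := by
  ext a b
  classical
  rw [toSetoidFin_iff, finJoin]
  exact mem_part_ofSetoid_iff_rel.trans (Setoid.comm' _)

lemma card_parts_finJoin :
    #(σ.finJoin τ).parts = Nat.card (Quotient (σ.toSetoidFin ⊔ τ.toSetoidFin)) := by
  rw [← card_quotient_toSetoidFin, toSetoidFin_finJoin]

lemma card_parts_finJoin_le_left : #(σ.finJoin τ).parts ≤ #σ.parts := by
  rw [card_parts_finJoin, ← card_quotient_toSetoidFin]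
  exact Setoid.card_quotient_le_of_le le_sup_left

lemma card_parts_finJoin_self : #(σ.finJoin σ).parts = #σ.parts := by
  rw [card_parts_finJoin, sup_idem, card_quotient_toSetoidFin]

lemma eq_of_card_parts_finJoin_eq (hσ : #(σ.finJoin τ).parts = #σ.parts)
    (hτ : #(σ.finJoin τ).parts = #τ.parts) : σ = τ := by
  rw [card_parts_finJoin, ← card_quotient_toSetoidFin] at hσ hτ
  exact toSetoidFin_injective ((Setoid.eq_of_le_of_card_quotient_eq le_sup_left hσ).trans
    (Setoid.eq_of_le_of_card_quotient_eq le_sup_right hτ).symm)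

end Finpartition

section Respects

variable {N m : ℕ} (σ τ : Finpartition (univ : Finset (Fin N)))

lemma respects_iff_le_ker (k : Fin N → Fin m) : Respects k σ ↔ σ.toSetoidFin ≤ Setoid.ker k :=
  ⟨fun h _ _ ⟨s, hs, ha, hb⟩ => h s hs _ ha _ hb, fun h _ hs _ ha _ hb => h ⟨_, hs, ha, hb⟩⟩

lemma respects_finJoin_iff (k : Fin N → Fin m) :
    Respects k (σ.finJoin τ) ↔ Respects k σ ∧ Respects k τ := by
  simp only [respects_iff_le_ker, Finpartition.toSetoidFin_finJoin, sup_le_iff]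

lemma card_filter_respects : #{k : Fin N → Fin m | Respects k σ} = m ^ #σ.parts := by
  rw [← Fintype.card_subtype, ← Nat.card_eq_fintype_card,
    Nat.card_congr ((Equiv.subtypeEquivRight (respects_iff_le_ker σ)).trans (Setoid.liftEquiv _)),
    Nat.card_fun, Finpartition.card_quotient_toSetoidFin, Nat.card_fin]

lemma sum_mul_sum_filter_respects {R : Type*} [CommSemiring R]
    (S : Finset (Finpartition (univ : Finset (Fin N))))
    (f g : Finpartition (univ : Finset (Fin N)) → R) :
    ∑ k : Fin N → Fin m, (∑ σ ∈ S with Respects k σ, f σ) * (∑ τ ∈ S with Respects k τ, g τ) =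
      ∑ σ ∈ S, ∑ τ ∈ S, (m : R) ^ #(σ.finJoin τ).parts * (f σ * g τ) := by
  simp_rw [sum_filter, sum_mul_sum, ite_zero_mul_ite_zero, ← respects_finJoin_iff]
  rw [sum_comm]
  refine sum_congr rfl fun σ _ => ?_
  rw [sum_comm]
  refine sum_congr rfl fun τ _ => ?_
  rw [← sum_filter, sum_const, card_filter_respects, nsmul_eq_mul, Nat.cast_pow]

end Respects

lemma IsPairPartition.two_mul_card_parts {N : ℕ} {σ : Finpartition (univ : Finset (Fin N))}
    (hσ : IsPairPartition σ) : 2 * #σ.parts = N :=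
  calc 2 * #σ.parts = ∑ s ∈ σ.parts, #s := by
        rw [sum_congr rfl hσ, sum_const, smul_eq_mul, mul_comm]
    _ = N := by rw [σ.sum_card_parts, card_univ, Fintype.card_fin]

section PairPartition

variable {n : ℕ} {σ τ : Finpartition (univ : Finset (Fin (2 * n)))}

lemma IsPairPartition.card_parts_finJoin_le (hσ : IsPairPartition σ) :
    #(σ.finJoin τ).parts ≤ n := by
  have := hσ.two_mul_card_parts
  have := σ.card_parts_finJoin_le_left τ
  omega

lemma IsPairPartition.card_parts_finJoin_eq_iff (hσ : IsPairPartition σ)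
    (hτ : IsPairPartition τ) : #(σ.finJoin τ).parts = n ↔ σ = τ := by
  have hσn := hσ.two_mul_card_parts
  have hτn := hτ.two_mul_card_parts
  constructor
  · intro h
    exact σ.eq_of_card_parts_finJoin_eq τ (by omega) (by omega)
  · rintro rfl
    rw [σ.card_parts_finJoin_self]
    omega

end PairPartition

open Filter Topology

lemma tendsto_natCast_zpow_neg_mul_pow {n j : ℕ} (hj : j ≤ n) :
    Tendsto (fun m : ℕ => (m : ℂ) ^ (-(n : ℤ)) * (m : ℂ) ^ j) atTop
      (𝓝 (if j = n then 1 else 0)) := by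
  have h_eq : (fun m : ℕ => (((m : ℝ) ^ ((j : ℤ) - n) : ℝ) : ℂ)) =ᶠ[atTop]
      fun m : ℕ => (m : ℂ) ^ (-(n : ℤ)) * (m : ℂ) ^ j := by
    filter_upwards [eventually_ne_atTop 0] with m hm
    rw [Complex.ofReal_zpow, Complex.ofReal_natCast, ← zpow_natCast (m : ℂ) j,
      ← zpow_add₀ (Nat.cast_ne_zero.2 hm), neg_add_eq_sub]
  refine Tendsto.congr' h_eq ?_
  split_ifs with h
  · simp [h]
  · have h_neg : (j : ℤ) - n < 0 := by omega
    rw [← Complex.ofReal_zero]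
    exact (Complex.continuous_ofReal.tendsto 0).comp
      ((tendsto_zpow_atTop_zero h_neg).comp tendsto_natCast_atTop_atTop)

lemma IsPairPartition.tendsto_zpow_mul_pow_card_parts_finJoin {n : ℕ}
    {σ τ : Finpartition (univ : Finset (Fin (2 * n)))} (hσ : IsPairPartition σ)
    (hτ : IsPairPartition τ) :
    Tendsto (fun m : ℕ => (m : ℂ) ^ (-(n : ℤ)) * (m : ℂ) ^ #(σ.finJoin τ).parts) atTop
      (𝓝 (if σ = τ then 1 else 0)) := by
  simpa only [hσ.card_parts_finJoin_eq_iff hτ] using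
    tendsto_natCast_zpow_neg_mul_pow (hσ.card_parts_finJoin_le (τ := τ))

theorem tendsto_wick_moments_general (n : ℕ) (q q₀ q₁ : ℂ) (hq : q = q₀ * q₁)
    (c : Fin (2 * n) → Fin (2 * n) → ℂ) :
    Filter.Tendsto
      (fun m : ℕ =>
        (m : ℂ) ^ (-(n : ℤ)) *
          ∑ k : Fin (2 * n) → Fin m,
            (∑ σ ∈ univ.filter fun σ => IsPairPartition σ ∧ Respects k σ,
              q₀ ^ crossings σ) *
            (∑ σ' ∈ univ.filter fun σ' => IsPairPartition σ' ∧ Respects k σ',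
              q₁ ^ crossings σ' * pairProd σ' c))
      Filter.atTop
      (nhds (∑ σ ∈ univ.filter fun σ => IsPairPartition σ,
        q ^ crossings σ * pairProd σ c)) := by
  classical
  simp_rw [← filter_filter, sum_mul_sum_filter_respects, mul_sum]
  have h_diag : ∑ σ ∈ univ.filter IsPairPartition, q ^ crossings σ * pairProd σ c =
      ∑ σ ∈ univ.filter IsPairPartition, ∑ τ ∈ univ.filter IsPairPartition,
        (if σ = τ then 1 else 0) * (q₀ ^ crossings σ * (q₁ ^ crossings τ * pairProd τ c)) := by
    refine sum_congr rfl fun σ hσ => ?_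
    rw [sum_boole_mul, if_pos hσ, hq, mul_pow, mul_assoc]
  rw [h_diag]
  refine tendsto_finsetSum _ fun σ hσ => tendsto_finsetSum _ fun τ hτ => ?_
  simpa only [mul_assoc] using
    ((mem_filter.1 hσ).2.tendsto_zpow_mul_pow_card_parts_finJoin (mem_filter.1 hτ).2).mul_const
      (q₀ ^ crossings σ * (q₁ ^ crossings τ * pairProd τ c))

/-- with `q = q₀ * q₁`, as `m → ∞`,
`m^(-n) ∑_k (∑_{σ respected by k} q₀^ι(σ)) (∑_{σ' respected by k} q₁^ι(σ') ∏_{{r,t}∈σ'} c r t)`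
converges to `∑_σ q^ι(σ) ∏_{{r,t}∈σ} c r t`, the sums being over pair partitions of
`Fin (2*n)`. -/
theorem tendsto_wick_moments (n : ℕ) (hn : 1 ≤ n) (q q₀ q₁ : ℂ) (hq : q = q₀ * q₁)
    (c : Fin (2 * n) → Fin (2 * n) → ℂ) :
    Filter.Tendsto
      (fun m : ℕ =>
        (m : ℂ) ^ (-(n : ℤ)) *
          ∑ k : Fin (2 * n) → Fin m,
            (∑ σ ∈ univ.filter fun σ => IsPairPartition σ ∧ Respects k σ,
              q₀ ^ crossings σ) *
            (∑ σ' ∈ univ.filter fun σ' => IsPairPartition σ' ∧ Respects k σ',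
              q₁ ^ crossings σ' * pairProd σ' c))
      Filter.atTop
      (nhds (∑ σ ∈ univ.filter fun σ => IsPairPartition σ,
        q ^ crossings σ * pairProd σ c)) :=
  tendsto_wick_moments_general n q q₀ q₁ hq c
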